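/- In the BP encoding of a binary tree, the lowest common ancestor of two nodes u and v is the unique common ancestor of u and v whose inorder rank lies between the inorder ranks of u and v (inclusive). -/

import Mathlib

/-- A binary tree: `leaf` is the empty tree; each internal node has an
optional left and an optional right subtree (possibly `leaf`). -/
inductive BinTree : Type where
  | leaf : BinTree
  | node : BinTree → BinTree → BinTree
deriving DecidableEq

namespace BinTree

/-- Number of nodes of a binary tree. -/
def size : BinTree → ℕ
  | leaf => 0
  | node l r => l.size + r.size + 1

/-- BalancedBP-parenthesis encoding of binary trees:
`BP(empty) = ε`, `BP(t) = '(' ++ BP(t_l) ++ ')' ++ BP(t_r)`.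
`true` is an opening parenthesis, `false` a closing one. -/
def bp : BinTree → List Bool
  | leaf => []
  | node l r => true :: (l.bp ++ false :: r.bp)

/-- The subtree reached by following a path (`false` = left, `true` = right). -/
def subtreeAt : BinTree → List Bool → Option BinTree
  | t, [] => some t
  | leaf, _ :: _ => none
  | node l _, false :: p => subtreeAt l p
  | node _ r, true :: p => subtreeAt r p

/-- A path identifies an actual node of the tree (not an empty slot). -/
def ValidPath (t : BinTree) (p : List Bool) : Prop :=
  ∃ l r, subtreeAt t p = some (node l r)

/-- Index (0-based) of the opening parenthesis of the node at a path. -/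
def openIdx : BinTree → List Bool → Option ℕ
  | leaf, _ => none
  | node _ _, [] => some 0
  | node l _, false :: p => (openIdx l p).map (· + 1)
  | node l r, true :: p => (openIdx r p).map (· + (l.bp.length + 2))

/-- Index (0-based) of the closing parenthesis of the node at a path. -/
def closeIdx : BinTree → List Bool → Option ℕ
  | leaf, _ => none
  | node l _, [] => some (l.bp.length + 1)
  | node l _, false :: p => (closeIdx l p).map (· + 1)
  | node l r, true :: p => (closeIdx r p).map (· + (l.bp.length + 2))

/-- Inorder rank (0-based) of the node at a path. -/
def inorderIdx : BinTree → List Bool → Option ℕ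
  | leaf, _ => none
  | node l _, [] => some l.size
  | node l _, false :: p => inorderIdx l p
  | node l r, true :: p => (inorderIdx r p).map (· + (l.size + 1))

end BinTree

/-- A sequence of parentheses (`true` = '(') is balanced: equally many opening
and closing parentheses, and every prefix has at least as many opening ones. -/
def BalancedBP (s : List Bool) : Prop :=
  s.count true = s.count false ∧
  ∀ k, (s.take k).count false ≤ (s.take k).count true

/-- `excess s k`: number of opening minus closing parentheses among the first `k` symbols. -/
def excess (s : List Bool) (k : ℕ) : ℤ :=
  ((s.take k).count true : ℤ) - ((s.take k).count false : ℤ)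

/-- `IsMatch s i j`: positions `i < j` form a matching pair of parentheses
(the standard stack-based matching). -/
def IsMatch (s : List Bool) (i j : ℕ) : Prop :=
  i < j ∧ j < s.length ∧ s[i]? = some true ∧ s[j]? = some false ∧
  excess s (j + 1) = excess s i ∧
  ∀ k, i < k → k ≤ j → excess s i < excess s k

/-- `EnclosePair s i v j`: `j` is the closing parenthesis whose matching pair
tightly encloses the matching pair `(i, v)`. -/
def EnclosePair (s : List Bool) (i v j : ℕ) : Prop :=
  (∃ i', IsMatch s i' j ∧ i' < i ∧ v < j) ∧
  ∀ i'' j'', IsMatch s i'' j'' → i'' < i → v < j'' → j ≤ j''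

/-- Longest common prefix of two paths. -/
def lcp : List Bool → List Bool → List Bool
  | a :: as, b :: bs => if a = b then a :: lcp as bs else []
  | _, _ => []

/-! In the subtree of a node `w`, the nodes of the left subtree have smaller inorder rank than
`w` and those of the right subtree larger rank. The paths to `u` and `v` leave their LCA on
opposite sides (unless the LCA is `u` or `v` itself), so its rank lies between theirs; a common
ancestor strictly above the LCA has `u` and `v` on the same side, so its rank does not. -/

theorem List.IsPrefix.exists_append_singleton_prefix {α : Type*} {p q : List α}
    (h : p <+: q) (hne : p ≠ q) : ∃ c, p ++ [c] <+: q :=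
  ⟨_, List.concat_get_prefix h (h.length_le.lt_of_ne fun hl => hne (h.eq_of_length hl))⟩

theorem prefix_lcp_iff {p a b : List Bool} : p <+: lcp a b ↔ p <+: a ∧ p <+: b := by
  induction a generalizing p b with
  | nil => cases b <;> cases p <;> simp [lcp]
  | cons x a ih =>
    cases b with
    | nil => cases p <;> simp [lcp]
    | cons y b =>
      cases p with
      | nil => simp
      | cons z p =>
        by_cases hxy : x = y
        · subst hxy
          simp only [lcp, if_true, List.cons_prefix_cons, ih]
          tauto
        · simp only [lcp, hxy, if_false, List.cons_prefix_cons]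
          grind

theorem lcp_prefix_left (a b : List Bool) : lcp a b <+: a :=
  (prefix_lcp_iff.1 (List.prefix_refl _)).1

theorem lcp_prefix_right (a b : List Bool) : lcp a b <+: b :=
  (prefix_lcp_iff.1 (List.prefix_refl _)).2

theorem lcp_diverges {a b : List Bool} (ha : lcp a b ≠ a) (hb : lcp a b ≠ b) :
    ∃ x, lcp a b ++ [x] <+: a ∧ lcp a b ++ [!x] <+: b := by
  obtain ⟨x, hx⟩ := (lcp_prefix_left a b).exists_append_singleton_prefix ha
  obtain ⟨y, hy⟩ := (lcp_prefix_right a b).exists_append_singleton_prefix hb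
  refine ⟨x, hx, ?_⟩
  have hxy : y ≠ x := by
    rintro rfl
    simpa using (prefix_lcp_iff.2 ⟨hx, hy⟩).length_le
  rwa [Bool.eq_not_of_ne hxy] at hy

namespace BinTree

theorem inorderIdx_lt_size {t : BinTree} {p : List Bool} {i : ℕ}
    (h : t.inorderIdx p = some i) : i < t.size := by
  induction p generalizing t i with
  | nil => cases t <;> simp_all [inorderIdx, size]
  | cons b p ih =>
    cases t with
    | leaf => simp [inorderIdx] at h
    | node l r =>
      cases b
      · simp only [inorderIdx] at h
        have := ih h
        simp only [size]; omega
      · simp only [inorderIdx, Option.map_eq_some_iff] at h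
        obtain ⟨j, hj, rfl⟩ := h
        have := ih hj
        simp only [size]; omega

theorem inorderIdx_lt_of_prefix_append_false {t : BinTree} {pw pu : List Bool} {iw iu : ℕ}
    (hw : t.inorderIdx pw = some iw) (hu : t.inorderIdx pu = some iu)
    (h : pw ++ [false] <+: pu) : iu < iw := by
  obtain ⟨s, rfl⟩ := h
  induction pw generalizing t iw iu with
  | nil =>
    cases t with
    | leaf => simp [inorderIdx] at hw
    | node l r =>
      simp only [inorderIdx, Option.some.injEq, List.nil_append, List.singleton_append] at hw hu
      exact hw ▸ inorderIdx_lt_size hu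
  | cons b pw ih =>
    cases t with
    | leaf => simp [inorderIdx] at hw
    | node l r =>
      cases b
      · exact ih hw hu
      · simp only [List.cons_append, inorderIdx, Option.map_eq_some_iff] at hw hu
        obtain ⟨jw, hjw, rfl⟩ := hw
        obtain ⟨ju, hju, rfl⟩ := hu
        have := ih hjw hju
        omega

theorem inorderIdx_lt_of_prefix_append_true {t : BinTree} {pw pu : List Bool} {iw iu : ℕ}
    (hw : t.inorderIdx pw = some iw) (hu : t.inorderIdx pu = some iu)
    (h : pw ++ [true] <+: pu) : iw < iu := by
  obtain ⟨s, rfl⟩ := h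
  induction pw generalizing t iw iu with
  | nil =>
    cases t with
    | leaf => simp [inorderIdx] at hw
    | node l r =>
      simp only [inorderIdx, Option.some.injEq, List.nil_append, List.singleton_append,
        Option.map_eq_some_iff] at hw hu
      obtain ⟨j, -, rfl⟩ := hu
      omega
  | cons b pw ih =>
    cases t with
    | leaf => simp [inorderIdx] at hw
    | node l r =>
      cases b
      · exact ih hw hu
      · simp only [List.cons_append, inorderIdx, Option.map_eq_some_iff] at hw hu
        obtain ⟨jw, hjw, rfl⟩ := hw
        obtain ⟨ju, hju, rfl⟩ := hu
        have := ih hjw hju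
        omega

theorem inorderIdx_lcp_between {t : BinTree} {pu pv : List Bool} {iu iv iw : ℕ}
    (hu : t.inorderIdx pu = some iu) (hv : t.inorderIdx pv = some iv)
    (hw : t.inorderIdx (lcp pu pv) = some iw) : min iu iv ≤ iw ∧ iw ≤ max iu iv := by
  by_cases hwu : lcp pu pv = pu
  · obtain rfl : iw = iu := by simpa [hwu, hu] using hw.symm
    omega
  by_cases hwv : lcp pu pv = pv
  · obtain rfl : iw = iv := by simpa [hwv, hv] using hw.symm
    omega
  obtain ⟨x, hxu, hxv⟩ := lcp_diverges hwu hwv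
  cases x
  · have := inorderIdx_lt_of_prefix_append_false hw hu hxu
    have := inorderIdx_lt_of_prefix_append_true hw hv hxv
    omega
  · have := inorderIdx_lt_of_prefix_append_true hw hu hxu
    have := inorderIdx_lt_of_prefix_append_false hw hv hxv
    omega

theorem eq_lcp_of_inorderIdx_between {t : BinTree} {pu pv pw : List Bool} {iu iv iw : ℕ}
    (hu : t.inorderIdx pu = some iu) (hv : t.inorderIdx pv = some iv)
    (hw : t.inorderIdx pw = some iw) (hpu : pw <+: pu) (hpv : pw <+: pv)
    (hbetween : min iu iv ≤ iw ∧ iw ≤ max iu iv) : pw = lcp pu pv := by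
  by_contra hne
  obtain ⟨c, hc⟩ := (prefix_lcp_iff.2 ⟨hpu, hpv⟩).exists_append_singleton_prefix hne
  have hcu := hc.trans (lcp_prefix_left pu pv)
  have hcv := hc.trans (lcp_prefix_right pu pv)
  cases c
  · have := inorderIdx_lt_of_prefix_append_false hw hu hcu
    have := inorderIdx_lt_of_prefix_append_false hw hv hcv
    omega
  · have := inorderIdx_lt_of_prefix_append_true hw hu hcu
    have := inorderIdx_lt_of_prefix_append_true hw hv hcv
    omega

end BinTree

/-- the LCA of `u` and `v` is the unique common ancestor of `u`
and `v` whose inorder rank lies (inclusively) between those of `u` and `v`. -/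
theorem lca_iff_inorder_between (t : BinTree) (pu pv pw : List Bool)
    (iu iv iw : ℕ)
    (hu : BinTree.inorderIdx t pu = some iu)
    (hv : BinTree.inorderIdx t pv = some iv)
    (hw : BinTree.inorderIdx t pw = some iw) :
    pw = lcp pu pv ↔
      (pw <+: pu ∧ pw <+: pv ∧ min iu iv ≤ iw ∧ iw ≤ max iu iv) := by
  constructor
  · rintro rfl
    exact ⟨lcp_prefix_left pu pv, lcp_prefix_right pu pv,
      BinTree.inorderIdx_lcp_between hu hv hw⟩
  · rintro ⟨hpu, hpv, hbetween⟩
    exact BinTree.eq_lcp_of_inorderIdx_between hu hv hw hpu hpv hbetween
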